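/- arXiv:math/0406150 — 4 statements merged into one kernel-verified Lean document; each statement's English description precedes it below -/
import Mathlib

section
/- Let μ ≥ 1 and let Δ, Δ′ be elements of the multivariate Laurent polynomial ring Λ_μ = ℤ[t₁^{±1},…,t_μ^{±1}]. Suppose that for every tuple (m₁,…,m_μ) ∈ ℤ^μ outside some finite set, there exist a sign ε ∈ {1,−1} and an integer ν such that the specialization of Δ under t_i ↦ t^{m_i} equals ε·t^ν times the specialization of Δ′ under t_i ↦ t^{m_i}, as elements of the one-variable Laurent polynomial ring ℤ[t^{±1}]. Then Δ and Δ′ agree up to a unit of Λ_μ: there exist a sign ε ∈ {1,−1} and a tuple (ν₁,…,ν_μ) ∈ ℤ^μ such that Δ = ε·t₁^{ν₁}⋯t_μ^{ν_μ}·Δ′ in Λ_μ. -/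
open LaurentPolynomial

/-- The specialization `t_i ↦ t^{m i}` from the multivariate Laurent polynomial ring
`ℤ[t₁^{±1},…,t_μ^{±1}] = AddMonoidAlgebra ℤ (Fin μ →₀ ℤ)` to the one-variable Laurent
polynomial ring `ℤ[t^{±1}]`, induced by the additive map `k ↦ ∑ i, m i * k i`. -/
noncomputable def laurentSpecialize {μ : ℕ} (m : Fin μ → ℤ) :
    AddMonoidAlgebra ℤ (Fin μ →₀ ℤ) →ₐ[ℤ] LaurentPolynomial ℤ :=
  AddMonoidAlgebra.mapDomainAlgHom ℤ ℤ
    (Finsupp.linearCombination ℤ m).toAddMonoidHom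

open Polynomial in
lemma exists_generic {μ : ℕ} (hμ : 1 ≤ μ) (V : Finset (Fin μ →₀ ℤ))
    (hV : (0 : Fin μ →₀ ℤ) ∉ V) (S : Finset (Fin μ → ℤ)) :
    ∃ m : Fin μ → ℤ, m ∉ S ∧ ∀ v ∈ V, Finsupp.linearCombination ℤ m v ≠ 0 := by
  classical
  set e : ℤ → (Fin μ → ℤ) := fun N i => N ^ (i.val + 1) with he
  have hinj : Function.Injective e := by
    intro N N' hNN
    have := congrFun hNN ⟨0, hμ⟩
    simpa [he] using this
  -- polynomial attached to v
  set p : (Fin μ →₀ ℤ) → ℤ[X] := fun v => ∑ i ∈ v.support, Polynomial.C (v i) * Polynomial.X ^ (i.val + 1) with hp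
  have heval : ∀ v (N : ℤ), (p v).eval N = Finsupp.linearCombination ℤ (e N) v := by
    intro v N
    rw [Finsupp.linearCombination_apply, Finsupp.sum]
    simp [hp, he, eval_finset_sum, mul_comm]
  have hpne : ∀ v ∈ V, p v ≠ 0 := by
    intro v hv hzero
    have hvne : v ≠ 0 := fun h0 => hV (h0 ▸ hv)
    obtain ⟨i₀, hi₀⟩ := Finsupp.support_nonempty_iff.mpr hvne
    have : (p v).coeff (i₀.val + 1) = v i₀ := by
      rw [hp, finset_sum_coeff]
      have : ∀ i ∈ v.support, (Polynomial.C (v i) * Polynomial.X ^ (i.val + 1)).coeff (i₀.val + 1)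
          = if i = i₀ then v i else 0 := by
        intro i hi
        rw [Polynomial.coeff_C_mul, Polynomial.coeff_X_pow]
        by_cases hii : i = i₀ <;> simp [hii, Fin.val_eq_val] <;> omega
      rw [Finset.sum_congr rfl this, Finset.sum_ite_eq' v.support i₀]
      simp [hi₀]
    rw [hzero] at this
    simp at this
    exact (Finsupp.mem_support_iff.mp hi₀) this.symm
  have hbad : (((↑S : Set (Fin μ → ℤ)).preimage e) ∪ ⋃ v ∈ V, {x : ℤ | (p v).IsRoot x}).Finite := by
    apply Set.Finite.union
    · exact Set.Finite.preimage hinj.injOn S.finite_toSet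
    · exact Set.Finite.biUnion V.finite_toSet fun v hv => finite_setOf_isRoot (hpne v hv)
  obtain ⟨N, hN⟩ := Set.Infinite.nonempty (Set.Infinite.diff Set.infinite_univ hbad)
  refine ⟨e N, ?_, ?_⟩
  · intro hmem
    exact hN.2 (Set.mem_union_left _ hmem)
  · intro v hv hz
    refine hN.2 (Set.mem_union_right _ ?_)
    refine Set.mem_biUnion hv ?_
    show (p v).IsRoot N
    rw [IsRoot, heval v N]
    exact hz

theorem stmt_0 {μ : ℕ} (hμ : 1 ≤ μ)
    (Δ Δ' : AddMonoidAlgebra ℤ (Fin μ →₀ ℤ))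
    (S : Finset (Fin μ → ℤ))
    (h : ∀ m : Fin μ → ℤ, m ∉ S →
      ∃ ε ν : ℤ, (ε = 1 ∨ ε = -1) ∧
        laurentSpecialize m Δ = ε • (T ν * laurentSpecialize m Δ')) :
    ∃ ε : ℤ, (ε = 1 ∨ ε = -1) ∧
      ∃ ν : Fin μ →₀ ℤ,
        Δ = ε • (AddMonoidAlgebra.single ν (1 : ℤ) * Δ') := by
  classical
  set A : Finset (Fin μ →₀ ℤ) := Δ.coeff.support with hA
  set B : Finset (Fin μ →₀ ℤ) := Δ'.coeff.support with hB
  set U : Finset (Fin μ →₀ ℤ) := A ∪ B with hU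
  set V : Finset (Fin μ →₀ ℤ) :=
    (Finset.image (fun q : ((Fin μ →₀ ℤ) × (Fin μ →₀ ℤ)) × ((Fin μ →₀ ℤ) × (Fin μ →₀ ℤ)) =>
      (q.1.1 - q.1.2) - (q.2.1 - q.2.2)) ((U ×ˢ U) ×ˢ (U ×ˢ U))) \ {0} with hVdef
  obtain ⟨m, hmS, hm⟩ := exists_generic hμ V (by simp [hVdef]) S
  set L : (Fin μ →₀ ℤ) →ₗ[ℤ] ℤ := Finsupp.linearCombination ℤ m with hL
  -- key injectivity property
  have P : ∀ a ∈ U, ∀ b ∈ U, ∀ a' ∈ U, ∀ b' ∈ U,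
      L a - L b = L a' - L b' → a - b = a' - b' := by
    intro a ha b hb a' ha' b' hb' hLL
    by_contra hne
    have hmem : (a - b) - (a' - b') ∈ V := by
      rw [hVdef]
      refine Finset.mem_sdiff.mpr ⟨?_, by simpa [sub_eq_zero] using hne⟩
      exact Finset.mem_image.mpr ⟨((a, b), (a', b')), by simp [ha, hb, ha', hb'], rfl⟩
    have := hm _ hmem
    apply this
    show L ((a - b) - (a' - b')) = 0
    rw [map_sub, map_sub, map_sub]
    omega
  have hinjU : Set.InjOn L ↑U := by
    intro a ha a' ha' hLa
    have := P a ha a' ha' a' ha' a' ha' (by omega)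
    simpa [sub_eq_zero] using (by rw [this]; simp : a - a' = 0)
  -- coefficient description of specialization
  have hspec : ∀ (x : AddMonoidAlgebra ℤ (Fin μ →₀ ℤ)),
      (laurentSpecialize m x).coeff = Finsupp.mapDomain L x.coeff := by
    intro x
    rfl
  have hcoeff : ∀ (x : AddMonoidAlgebra ℤ (Fin μ →₀ ℤ)), x.coeff.support ⊆ U → ∀ a ∈ U,
      (laurentSpecialize m x).coeff (L a) = x.coeff a := by
    intro x hx a ha
    rw [hspec]
    exact Finsupp.mapDomain_apply' ↑U x.coeff (by exact_mod_cast hx) hinjU ha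
  have hsupp : ∀ (x : AddMonoidAlgebra ℤ (Fin μ →₀ ℤ)) (n : ℤ),
      (laurentSpecialize m x).coeff n ≠ 0 → ∃ a ∈ x.coeff.support, L a = n := by
    intro x n hn
    rw [hspec] at hn
    have := Finsupp.mapDomain_support (f := (L : (Fin μ →₀ ℤ) → ℤ)) (s := x.coeff)
      (Finsupp.mem_support_iff.mpr hn)
    obtain ⟨a, ha, ha'⟩ := Finset.mem_image.mp this
    exact ⟨a, ha, ha'⟩
  obtain ⟨ε, ν, hε, heq⟩ := h m hmS
  have hεne : ε ≠ 0 := by rcases hε with h1 | h1 <;> simp [h1]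
  -- coefficientwise equation
  have key : ∀ n : ℤ, (laurentSpecialize m Δ).coeff n
      = ε * (laurentSpecialize m Δ').coeff (n - ν) := by
    intro n
    have := congrArg (fun p : LaurentPolynomial ℤ => p.coeff n) heq
    rw [this]
    show (ε • (T ν * laurentSpecialize m Δ')).coeff n = _
    rw [AddMonoidAlgebra.coeff_smul_apply, smul_eq_mul]
    congr 1
    show ((AddMonoidAlgebra.single ν (1:ℤ)) * laurentSpecialize m Δ').coeff n = _
    rw [AddMonoidAlgebra.coeff_single_mul_apply]
    rw [one_mul]
    congr 1
    omega
  by_cases hΔ' : Δ' = 0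
  · -- then Δ = 0 as well
    have hΔ : Δ = 0 := by
      ext a
      by_cases ha : a ∈ A
      · have h1 := hcoeff Δ (by simp [hU, hA, hB]) a (by simp [hU, ha])
        rw [key] at h1
        rw [hΔ'] at h1
        simpa using h1.symm
      · simpa [hA] using ha
    exact ⟨1, Or.inl rfl, 0, by simp [hΔ, hΔ']⟩
  · have hBne : B.Nonempty := Finsupp.support_nonempty_iff.mpr (fun h0 => hΔ' (AddMonoidAlgebra.ext h0))
    by_cases hΔ : Δ = 0
    · exfalso
      apply hΔ'
      ext b
      by_cases hb : b ∈ B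
      · have h1 := hcoeff Δ' (by simp [hU, hA, hB]) b (by simp [hU, hb])
        have h2 := key (L b + ν)
        rw [hΔ] at h2
        simp only [map_zero] at h2
        rw [add_sub_cancel_right] at h2
        rw [h1] at h2
        have : Δ'.coeff b = 0 := by
          rcases mul_eq_zero.mp h2.symm with h3 | h3
          · exact absurd h3 hεne
          · exact h3
        simp [this]
      · simpa [hB] using hb
    · -- main case
      have hAne : A.Nonempty := Finsupp.support_nonempty_iff.mpr (fun h0 => hΔ (AddMonoidAlgebra.ext h0))
      obtain ⟨a₀, ha₀⟩ := hAne
      have ha₀U : a₀ ∈ U := by simp [hU, ha₀]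
      have hΔa₀ : Δ.coeff a₀ ≠ 0 := Finsupp.mem_support_iff.mp ha₀
      have h1 : (laurentSpecialize m Δ').coeff (L a₀ - ν) ≠ 0 := by
        intro h0
        apply hΔa₀
        have := hcoeff Δ (by simp [hU, hA, hB]) a₀ ha₀U
        rw [key, h0, mul_zero] at this
        exact this.symm
      obtain ⟨b₀, hb₀, hLb₀⟩ := hsupp Δ' _ h1
      have hb₀U : b₀ ∈ U := by simp [hU, hB] at hb₀ ⊢; exact Or.inr hb₀
      have hν : ν = L a₀ - L b₀ := by omega
      refine ⟨ε, hε, a₀ - b₀, ?_⟩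
      ext k
      have hRHS : (ε • (AddMonoidAlgebra.single (a₀ - b₀) (1:ℤ) * Δ')).coeff k
          = ε * Δ'.coeff (k - (a₀ - b₀)) := by
        rw [AddMonoidAlgebra.coeff_smul_apply, smul_eq_mul]
        congr 1
        rw [AddMonoidAlgebra.coeff_single_mul_apply, one_mul]
        congr 1
        abel
      rw [hRHS]
      by_cases hk : k ∈ A
      · have hkU : k ∈ U := by simp [hU, hk]
        have hΔk : Δ.coeff k ≠ 0 := Finsupp.mem_support_iff.mp hk
        have hck := hcoeff Δ (by simp [hU, hA, hB]) k hkU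
        have h2 : (laurentSpecialize m Δ').coeff (L k - ν) ≠ 0 := by
          intro h0
          apply hΔk
          rw [← hck, key, h0, mul_zero]
        obtain ⟨b, hb, hLb⟩ := hsupp Δ' _ h2
        have hbU : b ∈ U := by simp [hU, hB] at hb ⊢; exact Or.inr hb
        have hdiff : k - b = a₀ - b₀ := P k hkU b hbU a₀ ha₀U b₀ hb₀U (by omega)
        have hbk : b = k - (a₀ - b₀) := by rw [← hdiff]; abel
        calc Δ.coeff k = (laurentSpecialize m Δ).coeff (L k) := hck.symm
          _ = ε * (laurentSpecialize m Δ').coeff (L k - ν) := key _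
          _ = ε * Δ'.coeff b := by rw [← hLb, hcoeff Δ' (by simp [hU, hA, hB]) b hbU]
          _ = ε * Δ'.coeff (k - (a₀ - b₀)) := by rw [← hbk]
      · have hΔk : Δ.coeff k = 0 := Finsupp.notMem_support_iff.mp (by simpa [hA] using hk)
        rw [hΔk]
        suffices hz : Δ'.coeff (k - (a₀ - b₀)) = 0 by rw [hz, mul_zero]
        by_contra hz
        set c := k - (a₀ - b₀) with hc
        have hcB : c ∈ B := Finsupp.mem_support_iff.mpr hz
        have hcU : c ∈ U := by simp [hU, hB] at hcB ⊢; exact Or.inr hcB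
        have h2 : (laurentSpecialize m Δ).coeff (L c + ν) ≠ 0 := by
          rw [key, add_sub_cancel_right, hcoeff Δ' (by simp [hU, hA, hB]) c hcU]
          exact mul_ne_zero hεne hz
        obtain ⟨a, ha, hLa⟩ := hsupp Δ _ h2
        have haU : a ∈ U := by simp [hU, hA] at ha ⊢; exact Or.inl ha
        have hdiff : a - c = a₀ - b₀ := P a haU c hcU a₀ ha₀U b₀ hb₀U (by omega)
        have : a = k := by
          have : a = c + (a₀ - b₀) := by rw [← hdiff]; abel
          rw [this, hc]; abel
        rw [this] at ha
        exact hk (by simpa [hA] using ha)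
end

section
/- Let μ ≥ 1, let Δ and Δ′ be polynomials in MvPolynomial (Fin μ) ℤ whose constant coefficients are strictly positive, and let N be a natural number strictly greater than the degree of Δ in each variable t_k and the degree of Δ′ in each variable t_k. Suppose there are ε ∈ {1,−1} and ν ∈ ℤ such that, in the Laurent polynomial ring ℤ[t^{±1}], the image of Δ under the substitution t_k ↦ t^{N^k} (for k = 0,…,μ−1) equals ε·t^ν times the image of Δ′ under the same substitution. Then ε = 1, ν = 0, and Δ = Δ′. -/
open LaurentPolynomial

-- injectivity of base-N encoding
lemma enc_inj (N : ℕ) : ∀ (n : ℕ) (d e : Fin n → ℕ), (∀ k, d k < N) → (∀ k, e k < N) →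
    (∑ k, d k * N ^ (k : ℕ)) = (∑ k, e k * N ^ (k : ℕ)) → d = e := by
  intro n
  induction n with
  | zero => intro d e _ _ _; funext k; exact k.elim0
  | succ n ih =>
    intro d e hd he hsum
    rw [Fin.sum_univ_succ, Fin.sum_univ_succ] at hsum
    have hrw : ∀ (g : Fin (n+1) → ℕ),
        (∑ k : Fin n, g k.succ * N ^ (k.succ : ℕ)) = (∑ k : Fin n, g k.succ * N ^ (k : ℕ)) * N := by
      intro g
      rw [Finset.sum_mul]
      refine Finset.sum_congr rfl fun k _ => ?_
      rw [Fin.val_succ, pow_succ, mul_assoc]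
    rw [hrw d, hrw e] at hsum
    simp only [Fin.val_zero, pow_zero, mul_one] at hsum
    have hN : 0 < N := lt_of_le_of_lt (Nat.zero_le _) (hd 0)
    have h0 : d 0 = e 0 := by
      have := congrArg (· % N) hsum
      simpa [Nat.add_mul_mod_self_right, Nat.mod_eq_of_lt (hd 0), Nat.mod_eq_of_lt (he 0)]
        using this
    have htail : (fun k : Fin n => d k.succ) = fun k : Fin n => e k.succ := by
      apply ih _ _ (fun k => hd k.succ) (fun k => he k.succ)
      have : (∑ k : Fin n, d k.succ * N ^ (k : ℕ)) * N = (∑ k : Fin n, e k.succ * N ^ (k : ℕ)) * N := by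
        omega
      exact Nat.eq_of_mul_eq_mul_right hN this
    funext k
    refine Fin.cases h0 (fun i => ?_) k
    exact congrFun htail i

-- representation of the substitution as a sum of singles
lemma aeval_repr {μ N : ℕ} (p : MvPolynomial (Fin μ) ℤ) :
    MvPolynomial.aeval (fun k : Fin μ => (T ((N : ℤ) ^ (k : ℕ)) : LaurentPolynomial ℤ)) p
      = ∑ e ∈ p.support,
          AddMonoidAlgebra.single ((∑ k, e k * N ^ (k : ℕ) : ℕ) : ℤ) (p.coeff e) := by
  rw [MvPolynomial.aeval_def, MvPolynomial.eval₂_eq']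
  refine Finset.sum_congr rfl fun e _ => ?_
  have halg : (algebraMap ℤ (LaurentPolynomial ℤ)) (p.coeff e) = LaurentPolynomial.C (p.coeff e) :=
    congrFun (congrArg _ (Subsingleton.elim _ _)) _
  rw [halg]
  have hprod : (∏ i : Fin μ, (T ((N : ℤ) ^ (i : ℕ)) : LaurentPolynomial ℤ) ^ e i)
      = T ((∑ k, e k * N ^ (k : ℕ) : ℕ) : ℤ) := by
    push_cast
    simp only [T_pow]
    induction (Finset.univ : Finset (Fin μ)) using Finset.cons_induction with
    | empty => simp
    | cons a s ha ih => rw [Finset.prod_cons, Finset.sum_cons, ih, T_add]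
  rw [hprod, ← single_eq_C_mul_T]

lemma aeval_coeff {μ N : ℕ} (hN0 : 0 < N) (p : MvPolynomial (Fin μ) ℤ)
    (hp : ∀ k, p.degreeOf k < N) (d : Fin μ →₀ ℕ) (hd : ∀ k, d k < N) :
    (MvPolynomial.aeval (fun k : Fin μ => (T ((N : ℤ) ^ (k : ℕ)) : LaurentPolynomial ℤ)) p).coeff
      ((∑ k, d k * N ^ (k : ℕ) : ℕ) : ℤ) = p.coeff d := by
  rw [aeval_repr, AddMonoidAlgebra.coeff_sum, Finset.sum_apply']
  rw [Finset.sum_eq_single d]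
  · exact Finsupp.single_eq_same
  · intro e he hne
    have hde : (∑ k, e k * N ^ (k : ℕ)) ≠ (∑ k, d k * N ^ (k : ℕ)) := by
      intro hcontra
      apply hne
      have hebd : ∀ k, e k < N := fun k =>
        (MvPolynomial.degreeOf_lt_iff hN0).mp (hp k) e he
      have := enc_inj N μ (⇑e) (⇑d) hebd hd hcontra
      exact DFunLike.coe_injective this
    exact Finsupp.single_eq_of_ne' (by exact_mod_cast hde)
  · intro hd'
    simp [MvPolynomial.notMem_support_iff.mp hd']

lemma aeval_neg {μ N : ℕ} (p : MvPolynomial (Fin μ) ℤ) (m : ℤ) (hm : m < 0) :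
    (MvPolynomial.aeval (fun k : Fin μ => (T ((N : ℤ) ^ (k : ℕ)) : LaurentPolynomial ℤ)) p).coeff m = 0 := by
  rw [aeval_repr, AddMonoidAlgebra.coeff_sum, Finset.sum_apply']
  refine Finset.sum_eq_zero fun e _ => ?_
  refine Finsupp.single_eq_of_ne' ?_
  intro hcontra
  have : (0 : ℤ) ≤ ((∑ k, e k * N ^ (k : ℕ) : ℕ) : ℤ) := Int.natCast_nonneg _
  omega

theorem stmt_1 {μ : ℕ} (hμ : 1 ≤ μ)
    (Δ Δ' : MvPolynomial (Fin μ) ℤ)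
    (hΔ : 0 < Δ.coeff 0) (hΔ' : 0 < Δ'.coeff 0)
    (N : ℕ)
    (hN : ∀ k : Fin μ, Δ.degreeOf k < N ∧ Δ'.degreeOf k < N)
    (ε : ℤ) (hε : ε = 1 ∨ ε = -1) (ν : ℤ)
    (h : MvPolynomial.aeval (fun k : Fin μ => (T ((N : ℤ) ^ (k : ℕ)) : LaurentPolynomial ℤ)) Δ
        = ε • (T ν *
          MvPolynomial.aeval (fun k : Fin μ => (T ((N : ℤ) ^ (k : ℕ)) : LaurentPolynomial ℤ)) Δ')) :
    ε = 1 ∧ ν = 0 ∧ Δ = Δ' := by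
  have hN0 : 0 < N := lt_of_le_of_lt (Nat.zero_le _) (hN ⟨0, hμ⟩).1
  set f := fun k : Fin μ => (T ((N : ℤ) ^ (k : ℕ)) : LaurentPolynomial ℤ) with hf
  set P := MvPolynomial.aeval f Δ with hPdef
  set P' := MvPolynomial.aeval f Δ' with hP'def
  -- pointwise form of h
  have hpt : ∀ m : ℤ, P.coeff m = ε * P'.coeff (-ν + m) := by
    intro m
    have := congrArg (fun q : LaurentPolynomial ℤ => q.coeff m) h
    rwa [AddMonoidAlgebra.coeff_smul, Finsupp.smul_apply, T, AddMonoidAlgebra.coeff_single_mul_apply, one_mul, smul_eq_mul] at this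
  -- coefficient at zero
  have henc0 : ((∑ k : Fin μ, (0 : Fin μ →₀ ℕ) k * N ^ (k : ℕ) : ℕ) : ℤ) = 0 := by simp
  have hP0 : P.coeff 0 = Δ.coeff 0 := by
    have := aeval_coeff hN0 Δ (fun k => (hN k).1) 0 (fun k => by simpa using hN0)
    rwa [henc0] at this
  have hP'0 : P'.coeff 0 = Δ'.coeff 0 := by
    have := aeval_coeff hN0 Δ' (fun k => (hN k).2) 0 (fun k => by simpa using hN0)
    rwa [henc0] at this
  have hεne : ε ≠ 0 := by rcases hε with h1 | h1 <;> simp [h1]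
  have hν : ν = 0 := by
    by_contra hν
    rcases lt_or_gt_of_ne hν with hlt | hgt
    · have h1 : P.coeff ν = ε * P'.coeff 0 := by simpa using hpt ν
      rw [aeval_neg Δ ν hlt, hP'0] at h1
      have := mul_ne_zero hεne (by omega : Δ'.coeff 0 ≠ 0)
      omega
    · have h1 : P.coeff 0 = ε * P'.coeff (-ν) := by simpa using hpt 0
      rw [hP0, aeval_neg Δ' (-ν) (by omega)] at h1
      omega
  have hε1 : ε = 1 := by
    rcases hε with h1 | h1
    · exact h1
    · exfalso
      have h2 : P.coeff 0 = ε * P'.coeff 0 := by simpa [hν] using hpt 0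
      rw [hP0, hP'0, h1] at h2
      omega
  refine ⟨hε1, hν, ?_⟩
  have hPP' : P = P' := by
    rw [h, hν, hε1, T_zero, one_smul, one_mul]

  ext d
  by_cases hd : ∀ k, d k < N
  · have h1 := aeval_coeff hN0 Δ (fun k => (hN k).1) d hd
    have h2 := aeval_coeff hN0 Δ' (fun k => (hN k).2) d hd
    rw [← h1, ← h2]
    exact congrArg (fun q : LaurentPolynomial ℤ => q.coeff _) hPP'
  · push_neg at hd
    obtain ⟨k, hk⟩ := hd
    have h1 : Δ.coeff d = 0 := by
      by_contra hc
      have := (MvPolynomial.degreeOf_lt_iff hN0).mp (hN k).1 d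
        (MvPolynomial.mem_support_iff.mpr hc)
      omega
    have h2 : Δ'.coeff d = 0 := by
      by_contra hc
      have := (MvPolynomial.degreeOf_lt_iff hN0).mp (hN k).2 d
        (MvPolynomial.mem_support_iff.mpr hc)
      omega
    rw [h1, h2]
end

section
/- Let R be a commutative ring and let m₁,…,m_μ be integers with greatest common divisor d. In the Laurent polynomial ring R[t^{±1}], the ideal generated by the elements t^{m₁} − 1, …, t^{m_μ} − 1 is equal to the principal ideal generated by t^d − 1. -/
/-!
The exponents `n` with `T n - 1 ∈ I` form an additive subgroup of `ℤ` for every ideal `I` of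
`R[T;T⁻¹]`, because `T (a + b) - 1 = T a * (T b - 1) + (T a - 1)`. This subgroup is an ideal of
`ℤ`, so `I` contains all `T n - 1` with `n` in a set `s` iff it contains `T d - 1` for a generator
`d` of `Ideal.span s`. By Bézout, `Ideal.span (Set.range m)` is generated by the gcd of the `m i`.
-/

open LaurentPolynomial

theorem Ideal.span_range_eq_span_singleton_gcd {R ι : Type*} [CommRing R] [IsBezout R]
    [NormalizedGCDMonoid R] [Fintype ι] (f : ι → R) :
    Ideal.span (Set.range f) = Ideal.span {Finset.univ.gcd f} := by
  refine le_antisymm (Ideal.span_le.mpr ?_) (Ideal.span_singleton_le_iff_mem _ |>.mpr ?_)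
  · rintro _ ⟨i, rfl⟩
    exact Ideal.mem_span_singleton.mpr (Finset.gcd_dvd (Finset.mem_univ i))
  · obtain ⟨g, hg⟩ := Finset.gcd_eq_sum_mul Finset.univ f
    rw [hg]
    exact Ideal.sum_mem _ fun i _ => Ideal.mul_mem_right _ _ (Ideal.subset_span ⟨i, rfl⟩)

namespace LaurentPolynomial

variable {R : Type*} [CommRing R]

def exponentIdeal (I : Ideal R[T;T⁻¹]) : Ideal ℤ :=
  AddSubgroup.toIntSubmodule
    { carrier := {n | T n - 1 ∈ I}
      zero_mem' := by simp
      add_mem' := fun {a b} ha hb => by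
        have h : (T (a + b) - 1 : R[T;T⁻¹]) = T a * (T b - 1) + (T a - 1) := by
          rw [T_add]; ring
        simpa only [Set.mem_ofPred_eq, h] using add_mem (I.mul_mem_left _ hb) ha
      neg_mem' := fun {a} ha => by
        have h : (T (-a) - 1 : R[T;T⁻¹]) = -T (-a) * (T a - 1) := by
          rw [neg_mul, mul_sub, ← T_add, neg_add_cancel, T_zero]; ring
        simpa only [Set.mem_ofPred_eq, h] using I.mul_mem_left _ ha }

theorem mem_exponentIdeal {I : Ideal R[T;T⁻¹]} {n : ℤ} :
    n ∈ exponentIdeal I ↔ T n - 1 ∈ I :=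
  Iff.rfl

theorem span_image_T_sub_one_le_iff {I : Ideal R[T;T⁻¹]} {s : Set ℤ} :
    Ideal.span ((fun n => T n - 1) '' s) ≤ I ↔ Ideal.span s ≤ exponentIdeal I := by
  simp only [Ideal.span_le, Set.image_subset_iff]
  rfl

theorem span_image_T_sub_one_eq_span_singleton {s : Set ℤ} {d : ℤ}
    (hd : Ideal.span s = Ideal.span {d}) :
    Ideal.span ((fun n => T n - 1 : ℤ → R[T;T⁻¹]) '' s) = Ideal.span {T d - 1} := by
  refine le_antisymm ?_ ?_
  · rw [span_image_T_sub_one_le_iff, hd, Ideal.span_singleton_le_iff_mem, mem_exponentIdeal]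
    exact Ideal.mem_span_singleton_self _
  · rw [← Set.image_singleton (f := fun n => (T n - 1 : R[T;T⁻¹])),
      span_image_T_sub_one_le_iff, ← hd, ← span_image_T_sub_one_le_iff]

end LaurentPolynomial

theorem stmt_5 {R : Type*} [CommRing R] {μ : ℕ} (m : Fin μ → ℤ) :
    Ideal.span (Set.range fun i : Fin μ => (T (m i) - 1 : LaurentPolynomial R))
      = Ideal.span {(T (Finset.univ.gcd m) - 1 : LaurentPolynomial R)} := by
  have h := span_image_T_sub_one_eq_span_singleton (R := R)
    (Ideal.span_range_eq_span_singleton_gcd m)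
  rwa [← Set.range_comp] at h
end

section
/- Let R be a commutative ring and let A be a symmetric n×n matrix over R all of whose rows sum to zero, i.e. Aᵀ = A and A.mulVec (fun _ => 1) = 0. Then all entries of the adjugate matrix of A are equal: there exists c ∈ R such that adjugate A = c • J, where J is the n×n matrix all of whose entries are 1. Equivalently, all signed (n−1)×(n−1) cofactors of A coincide, so that the (n−1)×(n−1) minor determinant of A is independent (up to the cofactor sign) of the choice of deleted row and column. -/
/-!
If `A u = 0` and `v ⬝ᵥ u = 0`, then `M = 1 + u vᵀ` satisfies `A M = A` and `det M = 1`, so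
`adj A = adj (A M) = adj M · adj A`; multiplying by `M` gives `M · adj A = adj A`, i.e.
`u (vᵀ adj A) = 0`. With `u = 𝟙` and `v = eᵢ - eⱼ` this says that all rows of `adj A` coincide,
and since `adj A` is symmetric together with `A`, all its entries coincide.
-/

open Matrix

section

variable {n R : Type*} [Fintype n] [DecidableEq n] [CommRing R]

theorem Matrix.vecMulVec_vecMul_adjugate_eq_zero (A : Matrix n n R) {u v : n → R}
    (hu : A *ᵥ u = 0) (hvu : v ⬝ᵥ u = 0) : vecMulVec u (v ᵥ* adjugate A) = 0 := by
  have hdet : (1 + vecMulVec u v).det = 1 := by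
    rw [vecMulVec_eq Unit, det_one_add_replicateCol_mul_replicateRow, hvu, add_zero]
  have hAM : A * (1 + vecMulVec u v) = A := by
    rw [Matrix.mul_add, Matrix.mul_one, mul_vecMulVec, hu, zero_vecMulVec, add_zero]
  have hM : (1 + vecMulVec u v) * adjugate A = adjugate A :=
    calc _ = (1 + vecMulVec u v) * adjugate (A * (1 + vecMulVec u v)) := by rw [hAM]
      _ = adjugate A := by
        rw [adjugate_mul_distrib, ← Matrix.mul_assoc, mul_adjugate, hdet, one_smul,
          Matrix.one_mul]
  rwa [Matrix.add_mul, Matrix.one_mul, add_eq_left, vecMulVec_mul] at hM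

theorem Matrix.adjugate_row_eq_of_mulVec_one_eq_zero (A : Matrix n n R)
    (hA : A *ᵥ (fun _ => 1) = 0) (i j : n) : adjugate A i = adjugate A j := by
  have h := A.vecMulVec_vecMul_adjugate_eq_zero hA (v := Pi.single i 1 - Pi.single j 1) (by simp)
  ext l
  simpa [sub_vecMul, single_one_vecMul, vecMulVec_apply, sub_eq_zero] using congr_fun₂ h i l

end

theorem stmt_7 {R : Type*} [CommRing R] {n : ℕ}
    (A : Matrix (Fin n) (Fin n) R)
    (hsym : Aᵀ = A)
    (hsum : A.mulVec (fun _ => (1 : R)) = 0) :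
    ∃ c : R, A.adjugate = c • Matrix.of (fun _ _ : Fin n => (1 : R)) := by
  cases n with
  | zero => exact ⟨0, Subsingleton.elim _ _⟩
  | succ m =>
    have hrow := A.adjugate_row_eq_of_mulVec_one_eq_zero hsum
    refine ⟨A.adjugate 0 0, ext fun i j => ?_⟩
    calc A.adjugate i j = A.adjugate 0 j := congr_fun (hrow i 0) j
      _ = A.adjugate j 0 := (IsSymm.adjugate hsym).apply j 0
      _ = A.adjugate 0 0 := congr_fun (hrow j 0) 0
      _ = _ := by simp
end
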